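/- Let m ≥ 3 and let v = (a_1,…,a_m), w = (b_1,…,b_m) ∈ ℤ^m. Then: (i) v ∼_v w (virtual braid equivalence) if and only if d(v) = d(w) and M(v)_{2d(v)} = M(w)_{2d(w)}; (ii) v ∼_{vP} w (virtual-pure-braid equivalence) if and only if d(v) = d(w) and a_i ≡ b_i (mod 2d(v)) for every i = 1,…,m. (Congruence mod 0 means equality in ℤ.) -/

import Mathlib

/-- Alternating sum `Δ(v) = Σ (-1)^i * v i` (0-indexed; `(-1)^(i-1) a_i` in 1-indexed terms). -/
def Delta {m : ℕ} (v : Fin m → ℤ) : ℤ :=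
  ∑ i : Fin m, (-1 : ℤ) ^ (i : ℕ) * v i

/-- `d(v)`: the (nonnegative) gcd of all pairwise differences of the entries of `v`;
for nonempty `v` this equals `gcd {v i - v 0 : i}`. -/
def dgcd {m : ℕ} (v : Fin m → ℤ) : ℤ :=
  Finset.univ.gcd (fun p : Fin m × Fin m => v p.1 - v p.2)

/-- `M(v)_N`: the multiset of residues of the entries of `v` modulo `N`
(for `N = 0` this is the multiset of the entries themselves). -/
def resM {m : ℕ} (v : Fin m → ℤ) (N : ℤ) : Multiset ℤ :=
  (Finset.univ.val : Multiset (Fin m)).map (fun i => v i % N)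

/-- The Hurwitz move `v·σ_i` (0-indexed `i`). -/
def sigmaAct {m : ℕ} (i : Fin (m - 1)) (v : Fin m → ℤ) : Fin m → ℤ :=
  have h : (i : ℕ) < m - 1 := i.isLt
  fun j =>
    if (j : ℕ) = (i : ℕ) then v ⟨(i : ℕ) + 1, by omega⟩
    else if (j : ℕ) = (i : ℕ) + 1 then
      2 * v ⟨(i : ℕ) + 1, by omega⟩ - v ⟨(i : ℕ), by omega⟩
    else v j

/-- The inverse Hurwitz move `v·σ_i⁻¹` (0-indexed `i`). -/
def sigmaInvAct {m : ℕ} (i : Fin (m - 1)) (v : Fin m → ℤ) : Fin m → ℤ :=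
  have h : (i : ℕ) < m - 1 := i.isLt
  fun j =>
    if (j : ℕ) = (i : ℕ) then 2 * v ⟨(i : ℕ), by omega⟩ - v ⟨(i : ℕ) + 1, by omega⟩
    else if (j : ℕ) = (i : ℕ) + 1 then v ⟨(i : ℕ), by omega⟩
    else v j

/-- The virtual move `v·τ_i`: swap the `i`-th and `(i+1)`-st entries (0-indexed `i`). -/
def tauAct {m : ℕ} (i : Fin (m - 1)) (v : Fin m → ℤ) : Fin m → ℤ :=
  have h : (i : ℕ) < m - 1 := i.isLt
  fun j =>
    if (j : ℕ) = (i : ℕ) then v ⟨(i : ℕ) + 1, by omega⟩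
    else if (j : ℕ) = (i : ℕ) + 1 then v ⟨(i : ℕ), by omega⟩
    else v j

/-- Hurwitz equivalence: the equivalence relation on `ℤ^m` generated by `v ∼ v·σ_i`. -/
def HurwitzEquiv {m : ℕ} : (Fin m → ℤ) → (Fin m → ℤ) → Prop :=
  Relation.EqvGen (fun v w => ∃ i : Fin (m - 1), w = sigmaAct i v)

/-- A letter of a braid word: an index `i` and a sign (`true` = `σ_i`, `false` = `σ_i⁻¹`). -/
abbrev BraidLetter (m : ℕ) := Fin (m - 1) × Bool

/-- Action of a single braid letter. -/
def braidLetterAct {m : ℕ} (l : BraidLetter m) (v : Fin m → ℤ) : Fin m → ℤ :=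
  if l.2 then sigmaAct l.1 v else sigmaInvAct l.1 v

/-- Action `v·β` of a braid word (letters applied in order). -/
def braidWordAct {m : ℕ} (β : List (BraidLetter m)) (v : Fin m → ℤ) : Fin m → ℤ :=
  β.foldl (fun w l => braidLetterAct l w) v

/-- The transposition `(i, i+1)` of `Fin m` associated to the index `i`. -/
def letterPerm {m : ℕ} (i : Fin (m - 1)) : Equiv.Perm (Fin m) :=
  have h : (i : ℕ) < m - 1 := i.isLt
  Equiv.swap ⟨(i : ℕ), by omega⟩ ⟨(i : ℕ) + 1, by omega⟩

/-- The underlying permutation `π_β` of a braid word: the product, composed in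
the same order as the letters are applied, of the transpositions `(i, i+1)`. -/
def braidWordPerm {m : ℕ} (β : List (BraidLetter m)) : Equiv.Perm (Fin m) :=
  β.foldl (fun p l => letterPerm l.1 * p) 1

/-- Pure-braid Hurwitz equivalence: related by a braid word with trivial
underlying permutation. -/
def PureEquiv {m : ℕ} (v w : Fin m → ℤ) : Prop :=
  ∃ β : List (BraidLetter m), braidWordAct β v = w ∧ braidWordPerm β = 1

/-- A letter of a virtual braid word: `(i, none)` = `τ_i`, `(i, some true)` = `σ_i`,
`(i, some false)` = `σ_i⁻¹`. -/
abbrev VBraidLetter (m : ℕ) := Fin (m - 1) × Option Bool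

/-- Action of a single virtual braid letter. -/
def vletterAct {m : ℕ} (l : VBraidLetter m) (v : Fin m → ℤ) : Fin m → ℤ :=
  match l.2 with
  | none => tauAct l.1 v
  | some true => sigmaAct l.1 v
  | some false => sigmaInvAct l.1 v

/-- Action `v·β` of a virtual braid word (letters applied in order). -/
def vwordAct {m : ℕ} (β : List (VBraidLetter m)) (v : Fin m → ℤ) : Fin m → ℤ :=
  β.foldl (fun w l => vletterAct l w) v

/-- The underlying permutation `π_β` of a virtual braid word. -/
def vwordPerm {m : ℕ} (β : List (VBraidLetter m)) : Equiv.Perm (Fin m) :=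
  β.foldl (fun p l => letterPerm l.1 * p) 1

/-- Virtual braid equivalence: `w = v·β` for some virtual braid word `β`. -/
def VirtualEquiv {m : ℕ} (v w : Fin m → ℤ) : Prop :=
  ∃ β : List (VBraidLetter m), vwordAct β v = w

/-- Virtual-pure-braid equivalence: related by a virtual braid word with trivial
underlying permutation. -/
def VPureEquiv {m : ℕ} (v w : Fin m → ℤ) : Prop :=
  ∃ β : List (VBraidLetter m), vwordAct β v = w ∧ vwordPerm β = 1

/-!
Each letter acts as a Hurwitz reflection `v a ↦ 2 v b - v a` (trivial for `τ_i`) followed by the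
transposition of the letter, and a reflection preserves `d(v)` and every entry modulo `2 d(v)`;
this gives the invariants. Conversely, `σ_i τ_i` is a pure word acting as a reflection, and
conjugating it by `τ`-words yields every reflection as a pure word. Reflections run a Euclidean
algorithm on the entries until two of them differ by exactly `d = d(v)`. Reflecting an entry
successively in these two translates it by `± 2d`, and reflecting the pair in itself translates
the pair by `± 2d`, so every entry can be brought to its residue modulo `2d`; for `d = 0` there is
nothing to do.
-/

section

variable {m : ℕ}

open Function

lemma dgcd_nonneg (v : Fin m → ℤ) : 0 ≤ dgcd v :=
  Int.nonneg_of_normalize_eq_self Finset.normalize_gcd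

lemma dgcd_dvd_sub (v : Fin m → ℤ) (p q : Fin m) : dgcd v ∣ v p - v q :=
  Finset.gcd_dvd (Finset.mem_univ (p, q))

lemma dvd_dgcd {v : Fin m → ℤ} {D : ℤ} (h : ∀ p q, D ∣ v p - v q) : D ∣ dgcd v :=
  Finset.dvd_gcd fun p _ => h p.1 p.2

lemma dgcd_comp_perm (v : Fin m → ℤ) (e : Equiv.Perm (Fin m)) : dgcd (v ∘ e) = dgcd v := by
  have key : ∀ (v : Fin m → ℤ) (e : Equiv.Perm (Fin m)), dgcd v ∣ dgcd (v ∘ e) :=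
    fun v e => dvd_dgcd fun p q => dgcd_dvd_sub v (e p) (e q)
  refine Int.dvd_antisymm (dgcd_nonneg _) (dgcd_nonneg _) ?_ (key v e)
  simpa [Function.comp_assoc] using key (v ∘ e) e⁻¹

lemma exists_ne_of_dgcd_pos {v : Fin m → ℤ} (h : 0 < dgcd v) : ∃ p q, v p ≠ v q := by
  by_contra! hc
  have h0 : dgcd v = 0 :=
    Finset.gcd_eq_zero_iff.2 fun (p : Fin m × Fin m) _ => sub_eq_zero.2 (hc p.1 p.2)
  exact h.ne' h0

def reflectAt (v : Fin m → ℤ) (a b : Fin m) : Fin m → ℤ :=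
  update v a (2 * v b - v a)

@[simp]
lemma reflectAt_self (v : Fin m → ℤ) (a : Fin m) : reflectAt v a a = v := by
  simp [reflectAt, two_mul]

@[simp]
lemma reflectAt_reflectAt (v : Fin m → ℤ) (a b : Fin m) :
    reflectAt (reflectAt v a b) a b = v := by
  rcases eq_or_ne a b with rfl | hab
  · simp
  · ext x
    rcases eq_or_ne x a with rfl | hxa
    · simp [reflectAt, hab.symm]
    · simp [reflectAt, hxa]

lemma reflectAt_comp_perm (v : Fin m → ℤ) (e : Equiv.Perm (Fin m)) (a b : Fin m) :
    reflectAt (v ∘ e) a b = reflectAt v (e a) (e b) ∘ e := by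
  simp [reflectAt, update_comp_equiv]

lemma reflectAt_modEq (v : Fin m → ℤ) (a b x : Fin m) :
    reflectAt v a b x ≡ v x [ZMOD 2 * dgcd v] := by
  rcases eq_or_ne x a with rfl | hxa
  · obtain ⟨c, hc⟩ := dgcd_dvd_sub v b x
    simp only [reflectAt, update_self]
    exact (Int.modEq_iff_dvd.2 ⟨-c, by linear_combination -2 * hc⟩)
  · simp [reflectAt, hxa, Int.ModEq.refl]

lemma dgcd_reflectAt (v : Fin m → ℤ) (a b : Fin m) : dgcd (reflectAt v a b) = dgcd v := by
  have key (v : Fin m → ℤ) : dgcd v ∣ dgcd (reflectAt v a b) := dvd_dgcd fun p q => by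
    have hp := (reflectAt_modEq v a b p).of_mul_left 2
    have hq := (reflectAt_modEq v a b q).of_mul_left 2
    have hpq : v q ≡ v p [ZMOD dgcd v] := Int.modEq_iff_dvd.2 (dgcd_dvd_sub v p q)
    exact (hq.trans (hpq.trans hp.symm)).dvd
  refine Int.dvd_antisymm (dgcd_nonneg _) (dgcd_nonneg _) ?_ (key v)
  simpa using key (reflectAt v a b)

lemma vwordAct_append (β₁ β₂ : List (VBraidLetter m)) (v : Fin m → ℤ) :
    vwordAct (β₁ ++ β₂) v = vwordAct β₂ (vwordAct β₁ v) :=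
  List.foldl_append ..

lemma foldl_letterPerm_mul (β : List (VBraidLetter m)) (x : Equiv.Perm (Fin m)) :
    β.foldl (fun p l => letterPerm l.1 * p) x = vwordPerm β * x := by
  induction β generalizing x with
  | nil => simp [vwordPerm]
  | cons l β ih =>
    show List.foldl _ (letterPerm l.1 * x) β = List.foldl _ (letterPerm l.1 * 1) β * x
    rw [ih, ih, mul_one, mul_assoc]

lemma vwordPerm_cons (l : VBraidLetter m) (β : List (VBraidLetter m)) :
    vwordPerm (l :: β) = vwordPerm β * letterPerm l.1 := by
  rw [vwordPerm, List.foldl_cons, foldl_letterPerm_mul, mul_one]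

lemma vwordPerm_append (β₁ β₂ : List (VBraidLetter m)) :
    vwordPerm (β₁ ++ β₂) = vwordPerm β₂ * vwordPerm β₁ := by
  rw [vwordPerm, List.foldl_append, foldl_letterPerm_mul β₂]
  rfl

lemma letterPerm_eq_swap {i : Fin (m - 1)} {a b : Fin m} (ha : (a : ℕ) = i)
    (hb : (b : ℕ) = i + 1) : letterPerm i = Equiv.swap a b := by
  obtain ⟨a, _⟩ := a
  obtain ⟨b, _⟩ := b
  subst ha hb
  rfl

lemma tauAct_eq_comp (i : Fin (m - 1)) (v : Fin m → ℤ) : tauAct i v = v ∘ letterPerm i := by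
  obtain ⟨i, hi⟩ := i
  rw [letterPerm_eq_swap (a := ⟨i, by omega⟩) (b := ⟨i + 1, by omega⟩) rfl rfl]
  ext ⟨j, hj⟩
  simp only [tauAct, Function.comp_apply, Equiv.swap_apply_def, Fin.ext_iff]
  split_ifs <;> rfl

lemma sigmaAct_eq_comp {i : Fin (m - 1)} {a b : Fin m} (ha : (a : ℕ) = i)
    (hb : (b : ℕ) = i + 1) (v : Fin m → ℤ) : sigmaAct i v = reflectAt v a b ∘ letterPerm i := by
  rw [letterPerm_eq_swap ha hb]
  obtain ⟨a, _⟩ := a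
  obtain ⟨b, _⟩ := b
  simp only at ha hb
  subst ha hb
  ext ⟨j, hj⟩
  simp only [sigmaAct, reflectAt, Function.comp_apply, Equiv.swap_apply_def,
    update_apply, Fin.ext_iff]
  split_ifs <;> simp_all

lemma sigmaInvAct_eq_comp {i : Fin (m - 1)} {a b : Fin m} (ha : (a : ℕ) = i)
    (hb : (b : ℕ) = i + 1) (v : Fin m → ℤ) :
    sigmaInvAct i v = reflectAt v b a ∘ letterPerm i := by
  rw [letterPerm_eq_swap ha hb]
  obtain ⟨a, _⟩ := a
  obtain ⟨b, _⟩ := b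
  simp only at ha hb
  subst ha hb
  ext ⟨j, hj⟩
  simp only [sigmaInvAct, reflectAt, Function.comp_apply, Equiv.swap_apply_def,
    update_apply, Fin.ext_iff]
  split_ifs <;> simp_all

lemma exists_vletterAct_eq_comp (l : VBraidLetter m) (v : Fin m → ℤ) :
    ∃ a b, vletterAct l v = reflectAt v a b ∘ letterPerm l.1 := by
  obtain ⟨⟨i, hi⟩, o⟩ := l
  have ha : ((⟨i, by omega⟩ : Fin m) : ℕ) = i := rfl
  have hb : ((⟨i + 1, by omega⟩ : Fin m) : ℕ) = i + 1 := rfl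
  rcases o with _ | _ | _
  · exact ⟨⟨i, by omega⟩, ⟨i, by omega⟩, by simp [vletterAct, tauAct_eq_comp]⟩
  · exact ⟨_, _, sigmaInvAct_eq_comp ha hb v⟩
  · exact ⟨_, _, sigmaAct_eq_comp ha hb v⟩

lemma dgcd_vletterAct (l : VBraidLetter m) (v : Fin m → ℤ) : dgcd (vletterAct l v) = dgcd v := by
  obtain ⟨a, b, h⟩ := exists_vletterAct_eq_comp l v
  rw [h, dgcd_comp_perm, dgcd_reflectAt]

lemma vletterAct_modEq (l : VBraidLetter m) (v : Fin m → ℤ) (j : Fin m) :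
    vletterAct l v j ≡ v (letterPerm l.1 j) [ZMOD 2 * dgcd v] := by
  obtain ⟨a, b, h⟩ := exists_vletterAct_eq_comp l v
  rw [h]
  exact reflectAt_modEq v a b _

lemma dgcd_vwordAct (β : List (VBraidLetter m)) (v : Fin m → ℤ) :
    dgcd (vwordAct β v) = dgcd v := by
  induction β generalizing v with
  | nil => rfl
  | cons l β ih => exact (ih _).trans (dgcd_vletterAct l v)

lemma vwordAct_modEq (β : List (VBraidLetter m)) (v : Fin m → ℤ) (j : Fin m) :
    vwordAct β v j ≡ v ((vwordPerm β)⁻¹ j) [ZMOD 2 * dgcd v] := by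
  induction β generalizing v with
  | nil => rfl
  | cons l β ih =>
    have h := ih (vletterAct l v)
    rw [dgcd_vletterAct] at h
    have hinv : (letterPerm l.1)⁻¹ = letterPerm l.1 := Equiv.swap_inv _ _
    rw [vwordPerm_cons, mul_inv_rev, hinv]
    exact h.trans (vletterAct_modEq l v _)

lemma VPureEquiv.refl (v : Fin m → ℤ) : VPureEquiv v v := ⟨[], rfl, rfl⟩

lemma VPureEquiv.trans {u v w : Fin m → ℤ} (huv : VPureEquiv u v) (hvw : VPureEquiv v w) :
    VPureEquiv u w := by
  obtain ⟨β₁, rfl, hβ₁⟩ := huv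
  obtain ⟨β₂, rfl, hβ₂⟩ := hvw
  exact ⟨β₁ ++ β₂, vwordAct_append .., by rw [vwordPerm_append, hβ₁, hβ₂, one_mul]⟩

lemma exists_vwordAct_eq_comp (Q : Equiv.Perm (Fin m)) :
    ∃ γ : List (VBraidLetter m), (∀ u, vwordAct γ u = u ∘ Q) ∧ vwordPerm γ = Q⁻¹ := by
  obtain _ | n := m
  · exact ⟨[], fun u => funext (Fin.elim0 ·), Subsingleton.elim _ _⟩
  have hQ : Q ∈ Submonoid.closure (Set.range fun i : Fin n => Equiv.swap i.castSucc i.succ) := by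
    rw [Equiv.Perm.mclosure_swap_castSucc_succ]
    trivial
  induction hQ using Submonoid.closure_induction with
  | mem x hx =>
    obtain ⟨⟨i, hi⟩, rfl⟩ := hx
    have hswap : letterPerm (m := n + 1) ⟨i, by omega⟩ = Equiv.swap _ _ :=
      letterPerm_eq_swap (a := Fin.castSucc ⟨i, hi⟩) (b := Fin.succ ⟨i, hi⟩) rfl rfl
    refine ⟨[(⟨i, by omega⟩, none)], fun u => ?_, ?_⟩
    · show tauAct _ u = u ∘ Equiv.swap _ _
      rw [← hswap]
      exact tauAct_eq_comp _ u
    · rw [vwordPerm_cons, hswap, Equiv.swap_inv]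
      rfl
  | one => exact ⟨[], fun u => rfl, inv_one.symm⟩
  | mul x y _ _ ihx ihy =>
    obtain ⟨γ₁, hγ₁, hπ₁⟩ := ihx
    obtain ⟨γ₂, hγ₂, hπ₂⟩ := ihy
    refine ⟨γ₁ ++ γ₂, fun u => ?_, ?_⟩
    · rw [vwordAct_append, hγ₁, hγ₂]
      rfl
    · rw [vwordPerm_append, hπ₁, hπ₂, mul_inv_rev]

lemma vpureEquiv_reflectAt (v : Fin m → ℤ) (a b : Fin m) : VPureEquiv v (reflectAt v a b) := by
  rcases eq_or_ne a b with rfl | hab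
  · simpa using VPureEquiv.refl v
  have hm : 1 < m := by simpa using Fintype.one_lt_card_iff.2 ⟨a, b, hab⟩
  set x : Fin m := ⟨0, by omega⟩
  set y : Fin m := ⟨1, by omega⟩
  set i : Fin (m - 1) := ⟨0, by omega⟩
  have hperm : letterPerm i = Equiv.swap x y := letterPerm_eq_swap rfl rfl
  obtain ⟨Q, hQ⟩ := Equiv.Perm.exists_extending_pair ![x, y] ![a, b]
    (injective_pair_iff_ne.2 (by simp [x, y, Fin.ext_iff]))
    (injective_pair_iff_ne.2 hab)
  have hQx : Q x = a := hQ 0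
  have hQy : Q y = b := hQ 1
  obtain ⟨γ, hγ, hπ⟩ := exists_vwordAct_eq_comp Q
  obtain ⟨γ', hγ', hπ'⟩ := exists_vwordAct_eq_comp Q⁻¹
  have hbase (u : Fin m → ℤ) : vwordAct [(i, some true), (i, none)] u = reflectAt u x y := by
    show tauAct i (sigmaAct i u) = _
    rw [tauAct_eq_comp, sigmaAct_eq_comp (a := x) (b := y) rfl rfl, hperm]
    ext j
    simp
  refine ⟨γ ++ [(i, some true), (i, none)] ++ γ', ?_, ?_⟩
  · rw [vwordAct_append, vwordAct_append, hγ, hbase, hγ', reflectAt_comp_perm, hQx, hQy,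
      Function.comp_assoc, ← Equiv.Perm.coe_mul, mul_inv_cancel, Equiv.Perm.coe_one,
      Function.comp_id]
  · rw [vwordPerm_append, vwordPerm_append, hπ, hπ', vwordPerm_cons, vwordPerm_cons, hperm]
    simp [vwordPerm]

lemma VPureEquiv.dgcd_eq {v w : Fin m → ℤ} (h : VPureEquiv v w) : dgcd w = dgcd v := by
  obtain ⟨β, rfl, -⟩ := h
  exact dgcd_vwordAct β v

lemma VPureEquiv.modEq {v w : Fin m → ℤ} (h : VPureEquiv v w) (i : Fin m) :
    w i ≡ v i [ZMOD 2 * dgcd v] := by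
  obtain ⟨β, rfl, hπ⟩ := h
  simpa [hπ] using vwordAct_modEq β v i

def ReflectionEquiv : (Fin m → ℤ) → (Fin m → ℤ) → Prop :=
  Relation.ReflTransGen fun u w => ∃ a b, w = reflectAt u a b

lemma reflectionEquiv_reflectAt (u : Fin m → ℤ) (a b : Fin m) :
    ReflectionEquiv u (reflectAt u a b) :=
  .single ⟨a, b, rfl⟩

namespace ReflectionEquiv

variable {u v w : Fin m → ℤ}

lemma refl (u : Fin m → ℤ) : ReflectionEquiv u u := Relation.ReflTransGen.refl

lemma trans (huv : ReflectionEquiv u v) (hvw : ReflectionEquiv v w) : ReflectionEquiv u w :=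
  Relation.ReflTransGen.trans huv hvw

lemma symm (h : ReflectionEquiv u w) : ReflectionEquiv w u := by
  induction h with
  | refl => exact refl u
  | @tail v _ _ hstep ih =>
    obtain ⟨a, b, rfl⟩ := hstep
    have h := reflectionEquiv_reflectAt (reflectAt v a b) a b
    rw [reflectAt_reflectAt] at h
    exact h.trans ih

lemma vpureEquiv (h : ReflectionEquiv u w) : VPureEquiv u w := by
  induction h with
  | refl => exact VPureEquiv.refl u
  | tail _ hstep ih =>
    obtain ⟨a, b, rfl⟩ := hstep
    exact ih.trans (vpureEquiv_reflectAt _ a b)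

lemma of_forall_succ {x : ℤ → Fin m → ℤ} (h : ∀ n, ReflectionEquiv (x n) (x (n + 1))) (t : ℤ) :
    ReflectionEquiv (x 0) (x t) := by
  induction t using Int.induction_on with
  | zero => exact refl _
  | succ n ih => exact ih.trans (h n)
  | pred n ih => exact ih.trans (by simpa using (h (-n - 1)).symm)

end ReflectionEquiv

lemma reflectAt_reflectAt_of_ne {u : Fin m → ℤ} {p j : Fin m} (hpj : p ≠ j) (k : Fin m) :
    reflectAt (reflectAt u p k) p j = update u p (u p + 2 * (u j - u k)) := by
  ext x
  rcases eq_or_ne x p with rfl | hxp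
  · simp [reflectAt, hpj.symm]
    ring
  · simp [reflectAt, hxp]

/-- Reflecting `u p` in `u k` and then in `u j` moves it by `2 (u j - u k)`. -/
lemma reflectionEquiv_update_of_dvd {u : Fin m → ℤ} {p j k : Fin m} (hpj : p ≠ j) (hpk : p ≠ k)
    {y : ℤ} (hy : 2 * (u j - u k) ∣ y - u p) : ReflectionEquiv u (update u p y) := by
  obtain ⟨t, ht⟩ := hy
  obtain rfl : y = u p + 2 * (u j - u k) * t := by linarith
  have step (n : ℤ) : ReflectionEquiv (update u p (u p + 2 * (u j - u k) * n))
      (update u p (u p + 2 * (u j - u k) * (n + 1))) := by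
    refine (reflectionEquiv_reflectAt _ p k).trans ?_
    convert reflectionEquiv_reflectAt _ p j using 1
    rw [reflectAt_reflectAt_of_ne hpj]
    simp [hpj.symm, hpk.symm]
    congr 1
    ring
  simpa using ReflectionEquiv.of_forall_succ step t

lemma reflectAt_reflectAt_swap {u : Fin m → ℤ} {p q : Fin m} (hpq : p ≠ q) :
    reflectAt (reflectAt u q p) p q =
      update (update u p (u p + 2 * (u p - u q))) q (u q + 2 * (u p - u q)) := by
  ext x
  rcases eq_or_ne x q with rfl | hxq
  · simp [reflectAt, hpq, hpq.symm]
    ring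
  rcases eq_or_ne x p with rfl | hxp
  · simp [reflectAt, hpq]
    ring
  · simp [reflectAt, hxp, hxq]

lemma reflectionEquiv_translate_pair (u : Fin m → ℤ) {p q : Fin m} (hpq : p ≠ q) (n : ℤ) :
    ReflectionEquiv u
      (update (update u p (u p + 2 * (u p - u q) * n)) q (u q + 2 * (u p - u q) * n)) := by
  have step (n : ℤ) : ReflectionEquiv
      (update (update u p (u p + 2 * (u p - u q) * n)) q (u q + 2 * (u p - u q) * n))
      (update (update u p (u p + 2 * (u p - u q) * (n + 1))) q
        (u q + 2 * (u p - u q) * (n + 1))) := by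
    refine (reflectionEquiv_reflectAt _ q p).trans ?_
    convert reflectionEquiv_reflectAt _ p q using 1
    rw [reflectAt_reflectAt_swap hpq]
    simp [hpq, update_comm hpq]
    ring_nf
  simpa using ReflectionEquiv.of_forall_succ step n

lemma reflectionEquiv_update_update {u : Fin m → ℤ} {p q : Fin m} (hpq : p ≠ q) {P Q : ℤ}
    (hP : 2 * (u p - u q) ∣ P - u p) (hPQ : P - Q = u p - u q ∨ P - Q = u q - u p) :
    ReflectionEquiv u (update (update u p P) q Q) := by
  have key : ∀ u : Fin m → ℤ, 2 * (u p - u q) ∣ P - u p → P - Q = u p - u q →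
      ReflectionEquiv u (update (update u p P) q Q) := by
    intro u ⟨n, hn⟩ hPQ
    obtain rfl : P = u p + 2 * (u p - u q) * n := by linarith
    obtain rfl : Q = u q + 2 * (u p - u q) * n := by linarith
    exact reflectionEquiv_translate_pair u hpq n
  rcases hPQ with hPQ | hPQ
  · exact key u hP hPQ
  · -- after reflecting `u q` in `u p` the difference of the pair changes sign
    have h := key (reflectAt u q p)
      (by simpa [reflectAt, hpq, show 2 * (u p - (2 * u p - u q)) = -(2 * (u p - u q)) by ring])
      (by simp [reflectAt, hpq]; linarith)
    simpa [reflectAt, update_comm hpq] using (reflectionEquiv_reflectAt u q p).trans h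

lemma reflectionEquiv_of_dvd {u v : Fin m → ℤ} {j k : Fin m} (hj : v j = u j) (hk : v k = u k)
    (h : ∀ x, 2 * (u j - u k) ∣ v x - u x) : ReflectionEquiv u v := by
  suffices ∀ s : Finset (Fin m), ReflectionEquiv u (s.piecewise v u) by
    simpa using this Finset.univ
  intro s
  induction s using Finset.induction_on with
  | empty => simpa using ReflectionEquiv.refl u
  | @insert p s hps ih =>
    rw [Finset.piecewise_insert]
    set w := s.piecewise v u
    have hw : ∀ x, v x = u x → w x = u x := fun x hx => by
      by_cases hxs : x ∈ s <;> simp [w, hxs, hx]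
    by_cases hp : p = j ∨ p = k
    · have hvp : v p = w p := by
        rcases hp with rfl | rfl
        · rw [hw p hj, hj]
        · rw [hw p hk, hk]
      rwa [hvp, update_eq_self]
    push Not at hp
    refine ih.trans (reflectionEquiv_update_of_dvd hp.1 hp.2 ?_)
    rw [hw j hj, hw k hk, show w p = u p from Finset.piecewise_eq_of_notMem _ _ _ hps]
    exact h p

lemma exists_two_mul_dvd_sub_abs_lt {δ x : ℤ} (hδ : δ ≠ 0) (hx : ¬ δ ∣ x) :
    ∃ r, 2 * δ ∣ r - x ∧ r ≠ 0 ∧ |r| < |δ| := by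
  set N := δ.natAbs
  have hN : 0 < N := Int.natAbs_pos.2 hδ
  have hlo := Int.le_bmod (x := x) (m := 2 * N) (by omega)
  have hhi := Int.bmod_lt (x := x) (m := 2 * N) (by omega)
  have hdvd : 2 * δ ∣ x.bmod (2 * N) - x := by
    refine dvd_trans ?_ (Int.ModEq.dvd (Int.bmod_emod (x := x) (m := 2 * N)).symm)
    push_cast [N, Int.natCast_natAbs]
    exact mul_dvd_mul_left 2 (self_dvd_abs δ)
  have hδx (r : ℤ) (hr : 2 * δ ∣ r - x) : δ ∣ r → δ ∣ x := fun h => by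
    simpa using dvd_sub h (dvd_trans (dvd_mul_left δ 2) hr)
  refine ⟨x.bmod (2 * N), hdvd, fun h0 => hx (hδx _ hdvd (by simp [h0])), ?_⟩
  have hne : x.bmod (2 * N) ≠ -N := fun h =>
    hx (hδx _ hdvd (by rw [h, dvd_neg]; exact Int.dvd_natAbs.2 dvd_rfl))
  rw [Int.abs_eq_natAbs δ, abs_lt]
  push_cast at hlo hhi
  omega

lemma exists_not_dvd_sub {u : Fin m → ℤ} {j k : Fin m} (h : |u j - u k| ≠ dgcd u) :
    ∃ p q, p ≠ j ∧ p ≠ k ∧ ¬ (u j - u k) ∣ u p - u q := by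
  obtain ⟨p, q, hpq⟩ : ∃ p q, ¬ (u j - u k) ∣ u p - u q := by
    by_contra! hall
    exact h (Int.dvd_antisymm (abs_nonneg _) (dgcd_nonneg u)
      ((abs_dvd _ _).2 (dvd_dgcd hall)) ((dvd_abs _ _).2 (dgcd_dvd_sub u j k)))
  by_cases hp : p = j ∨ p = k
  · by_cases hq : q = j ∨ q = k
    · refine absurd ?_ hpq
      rcases hp with rfl | rfl <;> rcases hq with rfl | rfl
      exacts [by simp, dvd_rfl, dvd_sub_comm.1 dvd_rfl, by simp]
    push Not at hq
    exact ⟨q, p, hq.1, hq.2, by rwa [dvd_sub_comm]⟩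
  push Not at hp
  exact ⟨p, q, hp.1, hp.2, hpq⟩

lemma exists_reflectionEquiv_abs_sub_lt {u : Fin m → ℤ} {j k : Fin m} (hjk : u j ≠ u k)
    (h : |u j - u k| ≠ dgcd u) :
    ∃ w p q, ReflectionEquiv u w ∧ w p ≠ w q ∧ |w p - w q| < |u j - u k| := by
  obtain ⟨p, q, hpj, hpk, hpq⟩ := exists_not_dvd_sub h
  obtain ⟨r, hr, hr0, hrlt⟩ := exists_two_mul_dvd_sub_abs_lt (sub_ne_zero.2 hjk) hpq
  have hqp : q ≠ p := by
    rintro rfl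
    simp at hpq
  refine ⟨update u p (u q + r), p, q, reflectionEquiv_update_of_dvd hpj hpk ?_, ?_, ?_⟩
  · simpa [sub_sub_eq_add_sub, add_comm] using hr
  · simpa [hqp] using hr0
  · simpa [hqp] using hrlt

lemma exists_reflectionEquiv_sub_eq_dgcd {u : Fin m → ℤ} (hd : 0 < dgcd u) :
    ∃ w j k, ReflectionEquiv u w ∧ w j - w k = dgcd u := by
  obtain ⟨j, k, hjk⟩ := exists_ne_of_dgcd_pos hd
  suffices ∀ n : ℕ, ∀ w j k, ReflectionEquiv u w → w j ≠ w k → (w j - w k).natAbs = n →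
      ∃ w j k, ReflectionEquiv u w ∧ w j - w k = dgcd u from
    this _ u j k (.refl u) hjk rfl
  intro n
  induction n using Nat.strong_induction_on with
  | _ n ih =>
    rintro w j k huw hjk rfl
    have hdw : dgcd w = dgcd u := huw.vpureEquiv.dgcd_eq
    by_cases h : |w j - w k| = dgcd u
    · rcases (abs_eq (dgcd_nonneg u)).1 h with h | h
      · exact ⟨w, j, k, huw, h⟩
      · exact ⟨w, k, j, huw, by linarith⟩
    obtain ⟨w', p, q, hww', hpq, hlt⟩ := exists_reflectionEquiv_abs_sub_lt hjk (hdw ▸ h)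
    rw [Int.abs_eq_natAbs, Int.abs_eq_natAbs] at hlt
    exact ih _ (by exact_mod_cast hlt) w' p q (huw.trans hww') hpq rfl

lemma emod_sub_emod_eq_or {d x y : ℤ} (hd : 0 < d) (h : 2 * d ∣ x - y - d) :
    x % (2 * d) - y % (2 * d) = d ∨ x % (2 * d) - y % (2 * d) = -d := by
  have hx := Int.emod_nonneg x (by omega : 2 * d ≠ 0)
  have hx' := Int.emod_lt_of_pos x (by omega : 0 < 2 * d)
  have hy := Int.emod_nonneg y (by omega : 2 * d ≠ 0)
  have hy' := Int.emod_lt_of_pos y (by omega : 0 < 2 * d)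
  obtain ⟨c, hc⟩ : 2 * d ∣ x % (2 * d) - y % (2 * d) - d :=
    (Int.modEq_zero_iff_dvd.1 ((((Int.mod_modEq x _).sub (Int.mod_modEq y _)).sub_right d).trans
      (Int.modEq_zero_iff_dvd.2 h)))
  have hc1 : c < 1 := by nlinarith
  have hc2 : -2 < c := by nlinarith
  interval_cases c
  · right; linarith
  · left; linarith

lemma reflectionEquiv_emod_of_sub_eq {w : Fin m → ℤ} {j k : Fin m} {d : ℤ} (hd : 0 < d)
    (hjk : w j - w k = d) : ReflectionEquiv w fun i => w i % (2 * d) := by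
  set c : Fin m → ℤ := fun i => w i % (2 * d)
  have hne : j ≠ k := by
    rintro rfl
    simp at hjk
    omega
  have hcw (x : Fin m) : 2 * d ∣ c x - w x := (Int.mod_modEq (w x) _).symm.dvd
  have hc : c j - c k = d ∨ c j - c k = -d := emod_sub_emod_eq_or hd (by simp [hjk])
  set w' := update (update w j (c j)) k (c k)
  have hw'j : w' j = c j := by simp [w', hne]
  have hw'k : w' k = c k := by simp [w']
  have h1 : ReflectionEquiv w w' := reflectionEquiv_update_update hne (hjk ▸ hcw j)
    (by rcases hc with h | h <;> [left; right] <;> linarith)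
  have h2 : ∀ x, 2 * (w' j - w' k) ∣ c x - w' x := by
    intro x
    have h2d : 2 * d ∣ c x - w' x := by
      by_cases hx : x = j ∨ x = k
      · rcases hx with rfl | rfl <;> simp [hw'j, hw'k]
      · push Not at hx
        simpa [w', hx.1, hx.2] using hcw x
    rcases hc with h | h <;> rw [hw'j, hw'k, h]
    · exact h2d
    · rwa [mul_neg, neg_dvd]
  exact h1.trans (reflectionEquiv_of_dvd hw'j.symm hw'k.symm h2)

theorem reflectionEquiv_emod (u : Fin m → ℤ) : ReflectionEquiv u fun i => u i % (2 * dgcd u) := by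
  rcases (dgcd_nonneg u).eq_or_lt with h0 | hd
  · simpa [← h0] using ReflectionEquiv.refl u
  obtain ⟨w, j, k, huw, hjk⟩ := exists_reflectionEquiv_sub_eq_dgcd hd
  have hwu : (fun i => w i % (2 * dgcd u)) = fun i => u i % (2 * dgcd u) :=
    funext huw.vpureEquiv.modEq
  exact huw.trans (hwu ▸ reflectionEquiv_emod_of_sub_eq hd hjk)

theorem vpureEquiv_iff {v w : Fin m → ℤ} :
    VPureEquiv v w ↔ dgcd v = dgcd w ∧ ∀ i, v i ≡ w i [ZMOD 2 * dgcd v] := by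
  refine ⟨fun h => ⟨h.dgcd_eq.symm, fun i => (h.modEq i).symm⟩, fun ⟨hd, hvw⟩ => ?_⟩
  have hc : (fun i => v i % (2 * dgcd v)) = fun i => w i % (2 * dgcd w) :=
    funext fun i => hd ▸ hvw i
  exact ((reflectionEquiv_emod v).trans (hc ▸ (reflectionEquiv_emod w).symm)).vpureEquiv

lemma resM_vwordAct (β : List (VBraidLetter m)) (v : Fin m → ℤ) :
    resM (vwordAct β v) (2 * dgcd v) = resM v (2 * dgcd v) := by
  have h : (fun i => vwordAct β v i % (2 * dgcd v)) =
      (fun i => v i % (2 * dgcd v)) ∘ ⇑(vwordPerm β)⁻¹ :=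
    funext (vwordAct_modEq β v)
  rw [resM, h, ← Multiset.map_map, Multiset.map_univ_val_equiv, resM]

lemma exists_perm_of_map_univ_eq {α β : Type*} [Fintype α] [DecidableEq β] {f g : α → β}
    (h : Finset.univ.val.map f = Finset.univ.val.map g) :
    ∃ σ : Equiv.Perm α, ∀ i, f (σ i) = g i := by
  have hcard (c : β) : Fintype.card {a // g a = c} = Fintype.card {a // f a = c} := by
    have := congrArg (Multiset.count c) h
    simp_rw [Multiset.count_map, @eq_comm _ c, ← Finset.filter_val, Finset.card_val] at this
    rw [Fintype.card_subtype, Fintype.card_subtype, this]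
  exact ⟨Equiv.ofFiberEquiv fun c => Fintype.equivOfCardEq (hcard c), Equiv.ofFiberEquiv_map _⟩

theorem virtualEquiv_iff {v w : Fin m → ℤ} :
    VirtualEquiv v w ↔ dgcd v = dgcd w ∧ resM v (2 * dgcd v) = resM w (2 * dgcd w) := by
  constructor
  · rintro ⟨β, rfl⟩
    rw [dgcd_vwordAct, resM_vwordAct]
    exact ⟨rfl, rfl⟩
  · rintro ⟨hd, hres⟩
    obtain ⟨σ, hσ⟩ := exists_perm_of_map_univ_eq hres
    obtain ⟨γ, hγ, -⟩ := exists_vwordAct_eq_comp σ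
    obtain ⟨β, hβ, -⟩ := (vpureEquiv_iff (v := v ∘ σ) (w := w)).2
      ⟨by rw [dgcd_comp_perm, hd], fun i => by rw [dgcd_comp_perm]; exact hd ▸ hσ i⟩
    exact ⟨γ ++ β, by rw [vwordAct_append, hγ, hβ]⟩

end

theorem stmt_18_general (m : ℕ) (v w : Fin m → ℤ) :
    (VirtualEquiv v w ↔
      dgcd v = dgcd w ∧ resM v (2 * dgcd v) = resM w (2 * dgcd w)) ∧
    (VPureEquiv v w ↔
      dgcd v = dgcd w ∧ ∀ i : Fin m, v i ≡ w i [ZMOD 2 * dgcd v]) :=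
  ⟨virtualEquiv_iff, vpureEquiv_iff⟩

/-- for `m ≥ 3`: (i) `v ∼_v w` iff `d(v) = d(w)` and
`M(v)_{2d(v)} = M(w)_{2d(w)}`; (ii) `v ∼_{vP} w` iff `d(v) = d(w)` and
`a_i ≡ b_i (mod 2d(v))` for all `i`. (Congruence mod 0 means equality.) -/
theorem stmt_18 (m : ℕ) (hm : 3 ≤ m) (v w : Fin m → ℤ) :
    (VirtualEquiv v w ↔
      dgcd v = dgcd w ∧ resM v (2 * dgcd v) = resM w (2 * dgcd w)) ∧
    (VPureEquiv v w ↔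
      dgcd v = dgcd w ∧ ∀ i : Fin m, v i ≡ w i [ZMOD 2 * dgcd v]) :=
  stmt_18_general m v w
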